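/- arXiv:2511.18263 — 2 statements merged into one kernel-verified Lean document; each statement's English description precedes it below -/
import Mathlib

section
/- In the reduction of Degree Bounded Matroid Independent Set to matroid (Δ+1)-parity: if I ⊆ V is feasible for the DBMIS instance (I is independent in M and |I ∩ e| ≤ g(e) for all hyperedges e), then the corresponding collection S(I) = {e'_v : v ∈ I} of (Δ+1)-element blocks is a feasible matroid-parity solution, i.e., the union of its blocks is independent in the direct-sum matroid M_Σ, and its weight equals w(I). -/
open scoped Classical

noncomputable section

variable {V : Type*} [DecidableEq V]

/-- The ground set of the matroid-parity instance: a copy `v^M` of each `v ∈ V`,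
a copy `v^e` for each pair of a vertex and a hyperedge, and dummy elements `(v, j)`. -/
abbrev ParityGround (V : Type*) := V ⊕ ((V × Finset V) ⊕ (V × ℕ))

/-- The copy `v^M`. -/
def vM (v : V) : ParityGround V := Sum.inl v

/-- The copy `v^e`. -/
def vCopy (v : V) (e : Finset V) : ParityGround V := Sum.inr (Sum.inl (v, e))

/-- The `j`-th dummy element of `D_v`. -/
def vDummy (v : V) (j : ℕ) : ParityGround V := Sum.inr (Sum.inr (v, j))

/-- The degree of `v` in the hypergraph `H`. -/
def hypDeg (H : Finset (Finset V)) (v : V) : ℕ := (H.filter (fun e => v ∈ e)).card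

/-- The block `e'_v`, consisting of `v^M`, the copies `v^e` for hyperedges `e ∋ v`,
and the `Δ - deg_H(v)` dummy elements of `D_v`. -/
def block (H : Finset (Finset V)) (Δ : ℕ) (v : V) : Finset (ParityGround V) :=
  {vM v} ∪ ((H.filter (fun e => v ∈ e)).image (fun e => vCopy v e)) ∪
    ((Finset.range (Δ - hypDeg H v)).image (fun j => vDummy v j))

/-- Independence in the direct sum `M_Σ` of the copy `M₀` of `M` on the elements `v^M`,
the uniform matroids of rank `g e` on the copies `{v^e : v ∈ e}` for `e ∈ H`, and the
free matroids on the dummy sets `D_v`. -/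
def IndepSigma (M : Matroid V) (H : Finset (Finset V)) (g : Finset V → ℕ) (Δ : ℕ)
    (S : Finset (ParityGround V)) : Prop :=
  M.Indep {v : V | vM v ∈ S} ∧
  (∀ e ∈ H, (e.filter (fun v => vCopy v e ∈ S)).card ≤ g e) ∧
  (∀ x ∈ S, (∃ v : V, x = vM v) ∨
    (∃ v : V, ∃ e ∈ H, v ∈ e ∧ x = vCopy v e) ∨
    (∃ v : V, ∃ j < Δ - hypDeg H v, x = vDummy v j))

/-- The weight of an element of the parity ground set: `w v` on `v^M`, `0` elsewhere. -/
def elemWeight (w : V → ℝ) : ParityGround V → ℝ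
  | Sum.inl v => w v
  | Sum.inr _ => 0

/-- The weight `w'` of a block of the parity instance. -/
def blockWeight (w : V → ℝ) (b : Finset (ParityGround V)) : ℝ :=
  ∑ x ∈ b, elemWeight w x

/-- Feasibility for the Degree Bounded Matroid Independent Set problem. -/
def DBMISFeasible (M : Matroid V) (H : Finset (Finset V)) (g : Finset V → ℕ)
    (S : Finset V) : Prop :=
  M.Indep ↑S ∧ ∀ e ∈ H, (S ∩ e).card ≤ g e


lemma mem_block {H : Finset (Finset V)} {Δ : ℕ} {v : V} {x : ParityGround V} :
    x ∈ block H Δ v ↔ x = vM v ∨ (∃ e ∈ H, v ∈ e ∧ x = vCopy v e) ∨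
      ∃ j < Δ - hypDeg H v, x = vDummy v j := by
  simp only [block, Finset.mem_union, Finset.mem_singleton, Finset.mem_image,
    Finset.mem_filter, Finset.mem_range]
  constructor
  · rintro ((h | ⟨e, ⟨he, hv⟩, rfl⟩) | ⟨j, hj, rfl⟩)
    · exact Or.inl h
    · exact Or.inr (Or.inl ⟨e, he, hv, rfl⟩)
    · exact Or.inr (Or.inr ⟨j, hj, rfl⟩)
  · rintro (h | ⟨e, he, hv, rfl⟩ | ⟨j, hj, rfl⟩)
    · exact Or.inl (Or.inl h)
    · exact Or.inl (Or.inr ⟨e, ⟨he, hv⟩, rfl⟩)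
    · exact Or.inr ⟨j, hj, rfl⟩

lemma vM_mem_block_iff {H : Finset (Finset V)} {Δ : ℕ} {u v : V} :
    vM u ∈ block H Δ v ↔ u = v := by
  simp [mem_block, vM, vCopy, vDummy]

lemma vCopy_mem_block_iff {H : Finset (Finset V)} {Δ : ℕ} {u v : V} {e : Finset V} :
    vCopy u e ∈ block H Δ v ↔ u = v ∧ e ∈ H ∧ v ∈ e := by
  simp only [mem_block, vM, vCopy, vDummy]
  constructor
  · rintro (h | ⟨f, hf, hv, h⟩ | ⟨j, hj, h⟩)
    · simp at h
    · simp only [Sum.inr.injEq, Sum.inl.injEq, Prod.mk.injEq] at h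
      exact ⟨h.1, h.2 ▸ hf, h.2 ▸ hv⟩
    · simp at h
  · rintro ⟨rfl, he, hv⟩
    exact Or.inr (Or.inl ⟨e, he, hv, rfl⟩)

/-- Forward direction of the reduction of DBMIS to matroid `(Δ+1)`-parity: if `I` is a
feasible DBMIS solution, then the union of the blocks `e'_v`, `v ∈ I`, is independent in
the direct-sum matroid `M_Σ`, and the weight of the parity solution `S(I)` equals `w(I)`. -/
theorem dbmis_to_parity (M : Matroid V) (H : Finset (Finset V)) (g : Finset V → ℕ)
    (Δ : ℕ) (hdeg : ∀ v : V, hypDeg H v ≤ Δ) (w : V → ℝ) (hw : ∀ v, 0 ≤ w v)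
    (I : Finset V) (hI : DBMISFeasible M H g I) :
    IndepSigma M H g Δ (I.biUnion (block H Δ)) ∧
      ∑ b ∈ I.image (block H Δ), blockWeight w b = ∑ v ∈ I, w v := by
  obtain ⟨hind, hcard⟩ := hI
  set S := I.biUnion (block H Δ) with hS
  have hmemS : ∀ x, x ∈ S ↔ ∃ v ∈ I, x ∈ block H Δ v := by
    intro x; simp [hS]
  refine ⟨⟨?_, ?_, ?_⟩, ?_⟩
  · have : {v : V | vM v ∈ S} = ↑I := by
      ext v
      simp only [Set.mem_setOf_eq, hmemS, Finset.coe_mem, Finset.mem_coe]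
      constructor
      · rintro ⟨u, hu, h⟩
        rw [vM_mem_block_iff] at h; exact h ▸ hu
      · intro hv; exact ⟨v, hv, vM_mem_block_iff.mpr rfl⟩
    rw [this]; exact hind
  · intro e he
    refine le_trans (Finset.card_le_card (fun v hv => ?_)) (hcard e he)
    rw [Finset.mem_filter] at hv
    obtain ⟨hve, hvS⟩ := hv
    rw [hmemS] at hvS
    obtain ⟨u, hu, hb⟩ := hvS
    obtain ⟨rfl, -, -⟩ := vCopy_mem_block_iff.mp hb
    exact Finset.mem_inter.mpr ⟨hu, hve⟩
  · intro x hx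
    rw [hmemS] at hx
    obtain ⟨v, hv, hb⟩ := hx
    rcases mem_block.mp hb with h | ⟨e, he, hve, h⟩ | ⟨j, hj, h⟩
    · exact Or.inl ⟨v, h⟩
    · exact Or.inr (Or.inl ⟨v, e, he, hve, h⟩)
    · exact Or.inr (Or.inr ⟨v, j, hj, h⟩)
  · rw [Finset.sum_image]
    · refine Finset.sum_congr rfl fun v hv => ?_
      unfold blockWeight
      rw [Finset.sum_eq_single (vM v)]
      · rfl
      · intro x hx hne
        rcases mem_block.mp hx with h | ⟨e, he, hve, h⟩ | ⟨j, hj, h⟩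
        · exact absurd h hne
        · subst h; rfl
        · subst h; rfl
      · intro h
        exact absurd (mem_block.mpr (Or.inl rfl)) h
    · intro a _ b _ hab
      have : vM a ∈ block H Δ b := hab ▸ mem_block.mpr (Or.inl rfl)
      exact vM_mem_block_iff.mp this
end
end

section
/- In the reduction of Degree Bounded Matroid Independent Set to matroid (Δ+1)-parity: if S is a feasible matroid-parity solution (the union of its blocks is independent in M_Σ), then I(S) = {v : e'_v ∈ S} is a feasible solution of the DBMIS instance, i.e., I(S) is independent in M and |I(S) ∩ e| ≤ g(e) for every hyperedge e, and w(I(S)) equals the weight of S. -/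
open scoped Classical

noncomputable section

variable {V : Type*} [DecidableEq V]

lemma mem_block_iff (H : Finset (Finset V)) (Δ : ℕ) (v : V) (x : ParityGround V) :
    x ∈ block H Δ v ↔ x = vM v ∨ (∃ e ∈ H, v ∈ e ∧ x = vCopy v e) ∨
      (∃ j < Δ - hypDeg H v, x = vDummy v j) := by
  simp [block, Finset.mem_union, Finset.mem_image, eq_comm, and_assoc]

lemma vM_mem_block (H : Finset (Finset V)) (Δ : ℕ) (v : V) : vM v ∈ block H Δ v := by
  rw [mem_block_iff]; left; rfl

lemma vM_mem_biUnion_iff (H : Finset (Finset V)) (Δ : ℕ) (J : Finset V) (v : V) :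
    vM v ∈ J.biUnion (block H Δ) ↔ v ∈ J := by
  simp only [Finset.mem_biUnion]
  constructor
  · rintro ⟨u, hu, hx⟩
    rw [mem_block_iff] at hx
    rcases hx with h | ⟨e, _, _, h⟩ | ⟨j, _, h⟩
    · cases (Sum.inl.inj h : v = u); exact hu
    · exact absurd h (by simp [vM, vCopy])
    · exact absurd h (by simp [vM, vDummy])
  · exact fun hv => ⟨v, hv, vM_mem_block H Δ v⟩

/-- Backward direction of the reduction of DBMIS to matroid `(Δ+1)`-parity: if the union
of the blocks `e'_v`, `v ∈ J`, is independent in the direct-sum matroid `M_Σ`, then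
`J = I(S)` is a feasible DBMIS solution, and `w(I(S))` equals the weight of `S`. -/
theorem parity_to_dbmis (M : Matroid V) (H : Finset (Finset V)) (g : Finset V → ℕ)
    (Δ : ℕ) (hdeg : ∀ v : V, hypDeg H v ≤ Δ) (w : V → ℝ) (hw : ∀ v, 0 ≤ w v)
    (J : Finset V) (hJ : IndepSigma M H g Δ (J.biUnion (block H Δ))) :
    DBMISFeasible M H g J ∧
      ∑ v ∈ J, w v = ∑ b ∈ J.image (block H Δ), blockWeight w b := by
  obtain ⟨hind, hdegb, -⟩ := hJ
  have hset : {v : V | vM v ∈ J.biUnion (block H Δ)} = ↑J := by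
    ext v; simp only [Set.mem_setOf_eq, Finset.mem_coe, vM_mem_biUnion_iff]
  constructor
  · constructor
    · rwa [hset] at hind
    · intro e he
      refine le_trans (Finset.card_le_card ?_) (hdegb e he)
      intro v hv
      rw [Finset.mem_inter] at hv
      rw [Finset.mem_filter]
      refine ⟨hv.2, Finset.mem_biUnion.2 ⟨v, hv.1, ?_⟩⟩
      rw [mem_block_iff]; exact Or.inr (Or.inl ⟨e, he, hv.2, rfl⟩)
  · have hinj : Set.InjOn (block H Δ) ↑J := by
      intro a _ b _ hab
      have : vM a ∈ block H Δ b := hab ▸ vM_mem_block H Δ a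
      rw [mem_block_iff] at this
      rcases this with h | ⟨e, _, _, h⟩ | ⟨j, _, h⟩
      · exact Sum.inl.inj h
      · exact absurd h (by simp [vM, vCopy])
      · exact absurd h (by simp [vM, vDummy])
    rw [Finset.sum_image (fun a ha b hb => hinj ha hb)]
    refine Finset.sum_congr rfl fun v hv => ?_
    unfold blockWeight
    rw [Finset.sum_eq_single (vM v)]
    · rfl
    · intro x hx hne
      rw [mem_block_iff] at hx
      rcases hx with h | ⟨e, _, _, h⟩ | ⟨j, _, h⟩
      · exact absurd h hne
      · subst h; rfl
      · subst h; rfl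
    · exact fun h => absurd (vM_mem_block H Δ v) h
end
end
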